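/- Let Λ̃ = ⋃_{k∈ℕ} (2^{-k}ℕ ∩ [k, k+1)) and let 0 < p < 1. If Λ is obtained from Λ̃ by keeping each element independently with probability p, then almost surely: for every L ∈ ℕ there exists N ∈ ℕ such that for all real x ≥ N, #(Λ ∩ [x, x + 2^{-L})) > p · 2^{J - L - 2}, where J = ⌊x⌋. -/

import Mathlib

open MeasureTheory Filter ProbabilityTheory Set
open scoped ENNReal

/-- `Λ̃ = ⋃_k (2^{-k}ℕ ∩ [k, k+1))`. -/
def tildeLambda0 : Set ℝ :=
  ⋃ k : ℕ, {x : ℝ | (∃ j : ℕ, x = (j : ℝ) / 2 ^ k) ∧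
    (k : ℝ) ≤ x ∧ x < (k : ℝ) + 1}

/-!
Cut row `J = n + t` of `Λ̃` (the grid `2^{-J}ℕ ∩ [J, J+1)`) into the `2^n` dyadic intervals
`[k/2^n, (k+1)/2^n)`; each contains exactly `2^t` points of `Λ̃`. By Chebyshev, the number of
kept points in such a block is at most half its mean `p 2^t` with probability at most `4/(p 2^t)`,
so some block of row `n + t` is bad with probability at most `2^n · 4/(p 2^t)`. This is summable
in `t`, and by Borel–Cantelli almost surely every block of every late row is good. Finally, with
`n = L + 1` and `k = ⌈2^n x⌉`, the interval `[x, x + 2^{-L})` contains the block `k`, whose row is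
at least `⌊x⌋`.
-/

open scoped Finset

section BernoulliCount

variable {ι Ω : Type*} [MeasurableSpace Ω] {P : Measure Ω} {X : ι → Ω → Bool} {p : ℝ}

lemma memLp_indicator_eq_true [IsFiniteMeasure P] (hXm : ∀ i, Measurable (X i)) (i : ι) :
    MemLp ({ω | X i ω = true}.indicator (1 : Ω → ℝ)) 2 P :=
  (memLp_const 1).indicator (hXm i (measurableSet_singleton true))

lemma integral_indicator_eq_true (hXm : ∀ i, Measurable (X i))
    (hX : ∀ i, P {ω | X i ω = true} = ENNReal.ofReal p) (hp : 0 ≤ p) (i : ι) :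
    P[{ω | X i ω = true}.indicator 1] = p := by
  have hmeas : MeasurableSet {ω | X i ω = true} := hXm i (measurableSet_singleton true)
  rw [integral_indicator_one hmeas, measureReal_def, hX, ENNReal.toReal_ofReal hp]

lemma variance_indicator_eq_true [IsProbabilityMeasure P] (hXm : ∀ i, Measurable (X i))
    (hX : ∀ i, P {ω | X i ω = true} = ENNReal.ofReal p) (hp : 0 ≤ p) (i : ι) :
    variance ({ω | X i ω = true}.indicator 1) P = p - p ^ 2 := by
  have hsq : ({ω | X i ω = true}.indicator (1 : Ω → ℝ)) ^ 2 = {ω | X i ω = true}.indicator 1 := by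
    funext ω
    by_cases h : X i ω = true <;> simp [h]
  rw [variance_eq_sub (memLp_indicator_eq_true hXm i), hsq,
    integral_indicator_eq_true hXm hX hp]

lemma measure_card_filter_le_half_mean_le [IsProbabilityMeasure P] (hXm : ∀ i, Measurable (X i))
    (hindep : iIndepFun X P) (hX : ∀ i, P {ω | X i ω = true} = ENNReal.ofReal p) (hp : 0 < p)
    {s : Finset ι} (hs : s.Nonempty) :
    P {ω | (#{i ∈ s | X i ω = true} : ℝ) ≤ p * #s / 2} ≤ ENNReal.ofReal (4 / p) / #s := by
  set S := ∑ i ∈ s, {ω | X i ω = true}.indicator (1 : Ω → ℝ)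
  have hS : ∀ ω, S ω = #{i ∈ s | X i ω = true} := fun ω => by
    simp only [S, Finset.sum_apply, Set.indicator_apply, Set.mem_ofPred_eq, Pi.one_apply,
      Finset.sum_boole]
  have hmean : P[S] = p * #s := by
    simp only [S, Finset.sum_apply]
    rw [integral_finsetSum _ fun i _ => (memLp_indicator_eq_true hXm i).integrable one_le_two]
    simp [integral_indicator_eq_true hXm hX hp.le, mul_comm]
  have hvar : variance S P = #s * (p - p ^ 2) := by
    have hindep' : iIndepFun (fun i => {ω | X i ω = true}.indicator (1 : Ω → ℝ)) P := by
      convert hindep.comp (fun _ b => if b then (1 : ℝ) else 0) fun _ => measurable_from_top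
        using 1
      ext i ω
      by_cases h : X i ω = true <;> simp [h]
    rw [IndepFun.variance_sum (fun i _ => memLp_indicator_eq_true hXm i)
      fun i _ j _ hij => hindep'.indepFun hij]
    simp only [variance_indicator_eq_true hXm hX hp.le, Finset.sum_const, nsmul_eq_mul]
  have hcard : (0 : ℝ) < #s := by exact_mod_cast hs.card_pos
  calc P {ω | (#{i ∈ s | X i ω = true} : ℝ) ≤ p * #s / 2}
      ≤ P {ω | p * #s / 2 ≤ |S ω - P[S]|} := by
        refine measure_mono fun ω hω => ?_
        rw [Set.mem_ofPred_eq] at hω ⊢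
        rw [hmean, hS, abs_sub_comm]
        exact le_abs.2 (Or.inl (by linarith))
    _ ≤ ENNReal.ofReal (variance S P / (p * #s / 2) ^ 2) :=
        meas_ge_le_variance_div_sq (memLp_finsetSum' _ fun i _ => memLp_indicator_eq_true hXm i)
          (by positivity)
    _ ≤ ENNReal.ofReal (4 / p / #s) := by
        refine ENNReal.ofReal_le_ofReal ?_
        have h : 4 / p * (p * #s / 2) ^ 2 = p * #s ^ 2 := by field_simp; ring
        rw [hvar, div_le_div_iff₀ (by positivity) hcard, h]
        nlinarith [mul_pos hp hcard]
    _ = ENNReal.ofReal (4 / p) / #s := by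
        rw [ENNReal.ofReal_div_of_pos hcard, ENNReal.ofReal_natCast]

end BernoulliCount

lemma div_eq_iff_mem_Ico {k m r : ℕ} (hm : 0 < m) :
    k / m = r ↔ k ∈ Finset.Ico (r * m) ((r + 1) * m) := by
  rw [Finset.mem_Ico, ← Nat.le_div_iff_mul_le hm, ← Nat.div_lt_iff_lt_mul hm]
  omega

/-- The points of mesh `2^{-(n+t)}` in `[k/2^n, (k+1)/2^n)`; when `⌊k/2^n⌋ = n + t` these are
exactly the points of `Λ̃` in that interval. -/
noncomputable def dyadicGrid (n t k : ℕ) : Finset ℝ :=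
  (Finset.Ico (k * 2 ^ t) ((k + 1) * 2 ^ t)).image fun j : ℕ => (j : ℝ) / 2 ^ (n + t)

lemma card_dyadicGrid (n t k : ℕ) : #(dyadicGrid n t k) = 2 ^ t := by
  rw [dyadicGrid, Finset.card_image_of_injective, Nat.card_Ico, add_one_mul,
    Nat.add_sub_cancel_left]
  intro a b h
  have h' : (a : ℝ) = b := (div_left_inj' (pow_ne_zero _ two_ne_zero)).1 h
  exact_mod_cast h'

lemma dyadicGrid_subset_Ico (n t k : ℕ) :
    ↑(dyadicGrid n t k) ⊆ Set.Ico ((k : ℝ) / 2 ^ n) ((k + 1) / 2 ^ n) := by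
  intro y hy
  obtain ⟨j, hj, rfl⟩ := Finset.mem_image.1 (Finset.mem_coe.1 hy)
  obtain ⟨hkj, hjk⟩ := Finset.mem_Ico.1 hj
  have hkj' : (k : ℝ) * 2 ^ t ≤ j := by exact_mod_cast hkj
  have hjk' : (j : ℝ) < (k + 1) * 2 ^ t := by exact_mod_cast hjk
  constructor
  · rw [div_le_div_iff₀ (by positivity) (by positivity), pow_add]
    nlinarith [pow_pos (two_pos : (0 : ℝ) < 2) n]
  · rw [div_lt_div_iff₀ (by positivity) (by positivity), pow_add]
    nlinarith [pow_pos (two_pos : (0 : ℝ) < 2) n]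

lemma dyadicGrid_subset_tildeLambda0 {n t k : ℕ} (hk : k / 2 ^ n = n + t) :
    ↑(dyadicGrid n t k) ⊆ tildeLambda0 := by
  obtain ⟨hlow, hup⟩ := (Nat.div_eq_iff (by positivity)).1 hk
  have hlow' : ((n + t : ℕ) : ℝ) ≤ k / 2 ^ n := by
    rw [le_div_iff₀ (by positivity)]
    exact_mod_cast hlow
  have hup' : ((k : ℝ) + 1) / 2 ^ n ≤ (n + t : ℕ) + 1 := by
    rw [div_le_iff₀ (by positivity)]
    have : k + 1 ≤ (n + t + 1) * 2 ^ n := by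
      have := Nat.one_le_two_pow (n := n)
      rw [add_one_mul]
      omega
    exact_mod_cast this
  intro y hy
  obtain ⟨j, -, rfl⟩ := Finset.mem_image.1 (Finset.mem_coe.1 hy)
  obtain ⟨hyk, hyk'⟩ := dyadicGrid_subset_Ico n t k hy
  exact Set.mem_iUnion.2 ⟨n + t, ⟨j, rfl⟩, hlow'.trans hyk, hyk'.trans_le hup'⟩

lemma finite_tildeLambda0_inter_Iio (b : ℝ) : (tildeLambda0 ∩ Iio b).Finite := by
  have hrow : ∀ k : ℕ, {x : ℝ | (∃ j : ℕ, x = (j : ℝ) / 2 ^ k) ∧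
      (k : ℝ) ≤ x ∧ x < (k : ℝ) + 1}.Finite := fun k => by
    refine ((Set.finite_lt_nat ((k + 1) * 2 ^ k)).image fun j : ℕ => (j : ℝ) / 2 ^ k).subset ?_
    rintro x ⟨⟨j, rfl⟩, -, hx⟩
    refine ⟨j, ?_, rfl⟩
    rw [div_lt_iff₀ (by positivity)] at hx
    exact_mod_cast hx
  refine ((Set.finite_lt_nat ⌈b⌉₊).biUnion fun k _ => hrow k).subset ?_
  rintro x ⟨hx, hxb⟩
  obtain ⟨k, hk⟩ := Set.mem_iUnion.1 hx
  exact Set.mem_biUnion (Nat.lt_ceil.2 (hk.2.1.trans_lt hxb)) hk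

open scoped Classical in
noncomputable def tildeBlock (n t k : ℕ) : Finset ↥tildeLambda0 :=
  (dyadicGrid n t k).subtype (· ∈ tildeLambda0)

lemma card_tildeBlock {n t k : ℕ} (hk : k / 2 ^ n = n + t) : #(tildeBlock n t k) = 2 ^ t := by
  classical
  rw [tildeBlock, Finset.card_subtype,
    Finset.filter_true_of_mem fun y hy => dyadicGrid_subset_tildeLambda0 hk hy, card_dyadicGrid]

lemma card_filter_le_natCard_inter {A I : Set ℝ} (hfin : (A ∩ I).Finite) (Y : ↥A → Bool)
    {s : Finset ↥A} (hs : ∀ i ∈ s, (i : ℝ) ∈ I) :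
    #{i ∈ s | Y i = true} ≤ Nat.card ↥({x | ∃ h : x ∈ A, Y ⟨x, h⟩ = true} ∩ I) := by
  rw [Nat.card_coe_set_eq, ← Finset.card_map (Function.Embedding.subtype _),
    ← Set.ncard_coe_finset]
  refine Set.ncard_le_ncard ?_ (hfin.subset fun x hx => ⟨hx.1.1, hx.2⟩)
  intro x hx
  obtain ⟨i, hi, rfl⟩ := Finset.mem_map.1 (Finset.mem_coe.1 hx)
  obtain ⟨his, hYi⟩ := Finset.mem_filter.1 hi
  exact ⟨⟨i.2, hYi⟩, hs i his⟩

lemma Ico_ceil_div_subset (n : ℕ) {x : ℝ} (hx : 0 ≤ x) :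
    Set.Ico ((⌈x * 2 ^ n⌉₊ : ℝ) / 2 ^ n) ((⌈x * 2 ^ n⌉₊ + 1) / 2 ^ n) ⊆
      Set.Ico x (x + 2 / 2 ^ n) := by
  have hceil := Nat.ceil_lt_add_one (by positivity : 0 ≤ x * 2 ^ n)
  refine Set.Ico_subset_Ico ?_ ?_
  · rw [le_div_iff₀ (by positivity)]
    exact Nat.le_ceil _
  · rw [div_le_iff₀ (by positivity), add_mul, div_mul_cancel₀ _ (by positivity)]
    linarith

lemma floor_le_ceil_mul_div (n : ℕ) {x : ℝ} (hx : 0 ≤ x) : ⌊x⌋₊ ≤ ⌈x * 2 ^ n⌉₊ / 2 ^ n := by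
  rw [Nat.le_div_iff_mul_le (by positivity)]
  have h : ((⌊x⌋₊ * 2 ^ n : ℕ) : ℝ) ≤ ⌈x * 2 ^ n⌉₊ := by
    push_cast
    exact (mul_le_mul_of_nonneg_right (Nat.floor_le hx) (by positivity)).trans (Nat.le_ceil _)
  exact_mod_cast h

section BadRows

variable {Ω : Type*} [MeasurableSpace Ω] {P : Measure Ω} [IsProbabilityMeasure P]
  {X : ↥tildeLambda0 → Ω → Bool} {p : ℝ}

variable (X p) in
def badRow (n t : ℕ) : Set Ω :=
  ⋃ k ∈ Finset.Ico ((n + t) * 2 ^ n) ((n + t + 1) * 2 ^ n),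
    {ω | (#{i ∈ tildeBlock n t k | X i ω = true} : ℝ) ≤ p * 2 ^ t / 2}

lemma measure_badRow_le (hXm : ∀ i, Measurable (X i)) (hindep : iIndepFun X P)
    (hX : ∀ i, P {ω | X i ω = true} = ENNReal.ofReal p) (hp : 0 < p) (n t : ℕ) :
    P (badRow X p n t) ≤ 2 ^ n * ENNReal.ofReal (4 / p) * 2⁻¹ ^ t := by
  have hblock : ∀ k ∈ Finset.Ico ((n + t) * 2 ^ n) ((n + t + 1) * 2 ^ n),
      P {ω | (#{i ∈ tildeBlock n t k | X i ω = true} : ℝ) ≤ p * 2 ^ t / 2} ≤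
        ENNReal.ofReal (4 / p) * 2⁻¹ ^ t := fun k hk => by
    have hcard := card_tildeBlock ((div_eq_iff_mem_Ico (by positivity)).2 hk)
    have hne : (tildeBlock n t k).Nonempty := Finset.card_pos.1 (by rw [hcard]; positivity)
    have := measure_card_filter_le_half_mean_le hXm hindep hX hp hne
    simp only [hcard, Nat.cast_pow, Nat.cast_ofNat] at this
    rwa [← ENNReal.inv_pow, ← div_eq_mul_inv]
  calc P (badRow X p n t)
      ≤ ∑ k ∈ Finset.Ico ((n + t) * 2 ^ n) ((n + t + 1) * 2 ^ n),
          P {ω | (#{i ∈ tildeBlock n t k | X i ω = true} : ℝ) ≤ p * 2 ^ t / 2} :=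
        measure_biUnion_finset_le _ _
    _ ≤ 2 ^ n * (ENNReal.ofReal (4 / p) * 2⁻¹ ^ t) := by
        refine (Finset.sum_le_card_nsmul _ _ _ hblock).trans_eq ?_
        rw [Nat.card_Ico, add_one_mul, Nat.add_sub_cancel_left, nsmul_eq_mul]
        push_cast
        rfl
    _ = 2 ^ n * ENNReal.ofReal (4 / p) * 2⁻¹ ^ t := (mul_assoc _ _ _).symm

lemma ae_eventually_notMem_badRow (hXm : ∀ i, Measurable (X i)) (hindep : iIndepFun X P)
    (hX : ∀ i, P {ω | X i ω = true} = ENNReal.ofReal p) (hp : 0 < p) :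
    ∀ᵐ ω ∂P, ∀ n, ∀ᶠ t in atTop, ω ∉ badRow X p n t := by
  refine ae_all_iff.2 fun n => ae_eventually_notMem (ne_top_of_le_ne_top ?_
    (ENNReal.tsum_le_tsum (measure_badRow_le hXm hindep hX hp n)))
  rw [ENNReal.tsum_mul_left, ENNReal.tsum_geometric_two]
  exact ENNReal.mul_ne_top (ENNReal.mul_ne_top (by simp) ENNReal.ofReal_ne_top) (by simp)

end BadRows

lemma lt_natCard_of_notMem_badRow {Ω : Type*} {X : ↥tildeLambda0 → Ω → Bool} {p : ℝ} {ω : Ω}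
    {n t : ℕ} (hω : ω ∉ badRow X p n t) {x : ℝ} (hx : 0 ≤ x)
    (hrow : ⌈x * 2 ^ n⌉₊ / 2 ^ n = n + t) :
    p * 2 ^ t / 2 < Nat.card ↥({y | ∃ h : y ∈ tildeLambda0, X ⟨y, h⟩ ω = true} ∩
      Set.Ico x (x + 2 / 2 ^ n)) := by
  classical
  set k := ⌈x * 2 ^ n⌉₊
  have hk := (div_eq_iff_mem_Ico (by positivity)).1 hrow
  have hgood : p * 2 ^ t / 2 < #{i ∈ tildeBlock n t k | X i ω = true} := by
    simpa [badRow] using fun h => hω (Set.mem_biUnion hk h)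
  refine hgood.trans_le (Nat.cast_le.2 (card_filter_le_natCard_inter
    ((finite_tildeLambda0_inter_Iio _).subset (Set.inter_subset_inter_right _ fun y hy => hy.2))
    _ fun i hi => ?_))
  exact Ico_ceil_div_subset n hx (dyadicGrid_subset_Ico n t k (Finset.mem_subtype.1 hi))

theorem density_lemma_general
    {Ω : Type*} [MeasurableSpace Ω] (P : Measure Ω) [IsProbabilityMeasure P]
    (p : ℝ) (hp : 0 < p)
    (X : ↥tildeLambda0 → Ω → Bool) (hXm : ∀ i, Measurable (X i))
    (hindep : iIndepFun X P)
    (hX : ∀ i, P {ω | X i ω = true} = ENNReal.ofReal p)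
    (Lam : Ω → Set ℝ)
    (hLam : ∀ ω, Lam ω = {x : ℝ | ∃ h : x ∈ tildeLambda0, X ⟨x, h⟩ ω = true}) :
    ∀ᵐ ω ∂P, ∀ L : ℕ, ∃ N : ℕ, ∀ x : ℝ, (N : ℝ) ≤ x →
      (Nat.card ↥(Lam ω ∩ Set.Ico x (x + (2:ℝ) ^ (-(L:ℤ)))) : ℝ) >
        p * (2:ℝ) ^ (⌊x⌋ - (L:ℤ) - 2) := by
  filter_upwards [ae_eventually_notMem_badRow hXm hindep hX hp] with ω hω L
  obtain ⟨T, hT⟩ := eventually_atTop.1 (hω (L + 1))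
  refine ⟨L + 1 + T, fun x hx => ?_⟩
  have hx0 : 0 ≤ x := (Nat.cast_nonneg _).trans hx
  have hfloor : L + 1 + T ≤ ⌊x⌋₊ := Nat.le_floor hx
  have hceil := floor_le_ceil_mul_div (L + 1) hx0
  set t := ⌈x * 2 ^ (L + 1)⌉₊ / 2 ^ (L + 1) - (L + 1)
  have hrow : ⌈x * 2 ^ (L + 1)⌉₊ / 2 ^ (L + 1) = L + 1 + t := by omega
  have hcount := lt_natCard_of_notMem_badRow (hT t (by omega)) hx0 hrow
  have hwidth : (2 : ℝ) ^ (-(L : ℤ)) = 2 / 2 ^ (L + 1) := by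
    rw [zpow_neg, zpow_natCast, pow_succ]
    field_simp
  have hthreshold : p * (2 : ℝ) ^ (⌊x⌋ - (L : ℤ) - 2) ≤ p * 2 ^ t / 2 := by
    rw [mul_div_assoc, ← zpow_natCast, div_eq_mul_inv, ← zpow_sub_one₀ two_ne_zero]
    refine mul_le_mul_of_nonneg_left (zpow_le_zpow_right₀ one_le_two ?_) hp.le
    rw [← Int.natCast_floor_eq_floor hx0]
    omega
  rw [hLam, hwidth]
  exact hthreshold.trans_lt hcount

/-- Density lemma: if `Λ` is obtained from `Λ̃` by keeping each element
independently with probability `p`, then almost surely, for every `L` there is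
`N` such that for all `x ≥ N`, `#(Λ ∩ [x, x+2^{-L})) > p·2^{⌊x⌋-L-2}`. -/
theorem density_lemma
    {Ω : Type*} [MeasurableSpace Ω] (P : Measure Ω) [IsProbabilityMeasure P]
    (p : ℝ) (hp : 0 < p) (hp1 : p < 1)
    (X : ↥tildeLambda0 → Ω → Bool) (hXm : ∀ i, Measurable (X i))
    (hindep : iIndepFun X P)
    (hX : ∀ i, P {ω | X i ω = true} = ENNReal.ofReal p)
    (Lam : Ω → Set ℝ)
    (hLam : ∀ ω, Lam ω = {x : ℝ | ∃ h : x ∈ tildeLambda0, X ⟨x, h⟩ ω = true}) :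
    ∀ᵐ ω ∂P, ∀ L : ℕ, ∃ N : ℕ, ∀ x : ℝ, (N : ℝ) ≤ x →
      (Nat.card ↥(Lam ω ∩ Set.Ico x (x + (2:ℝ) ^ (-(L:ℤ)))) : ℝ) >
        p * (2:ℝ) ^ (⌊x⌋ - (L:ℤ) - 2) :=
  density_lemma_general P p hp X hXm hindep hX Lam hLam
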